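/- Let G = (V,E) be a DAG, let Z, L ⊆ V be disjoint, and let M = G[∅_L. Then every inducing Z-trail π = V₁,…,Vₙ₊₁ in M has a subpath π′ (a path along a subsequence of π with the same endpoints V₁ and Vₙ₊₁) that is m-connected by Z in M. -/

import Mathlib

/-!
Common definitions: mixed graphs, walks, colliders, m-separation,
ancestral graphs, DAGs, MAGs, proper causal paths, adjustment criteria,
inducing paths, and MAG marginalization.
-/

universe u

/-- The four possible kinds of edges of a mixed graph, oriented along the
direction of traversal: `u → v`, `u ← v`, `u ↔ v`, `u − v`. -/
inductive EType where
  | right : EType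
  | left : EType
  | both : EType
  | undirEdge : EType
deriving DecidableEq

namespace EType

/-- The edge has an arrowhead at its first endpoint. -/
def headFst : EType → Prop
  | .left => True
  | .both => True
  | _ => False

/-- The edge has an arrowhead at its second endpoint. -/
def headSnd : EType → Prop
  | .right => True
  | .both => True
  | _ => False

end EType

/-- A mixed graph with directed, bidirected and undirected edges. -/
structure MixedGraph (V : Type u) where
  dir : V → V → Prop
  bi : V → V → Prop
  undir : V → V → Prop
  bi_symm : ∀ u v, bi u v → bi v u
  undir_symm : ∀ u v, undir u v → undir v u

namespace MixedGraph

variable {V : Type u}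

/-- `G.IsEdge e u v` holds if the graph contains the edge `e` from `u` to `v`
(read in the direction of traversal). -/
def IsEdge (G : MixedGraph V) : EType → V → V → Prop
  | .right, u, v => G.dir u v
  | .left, u, v => G.dir v u
  | .both, u, v => G.bi u v
  | .undirEdge, u, v => G.undir u v

/-- Walks in a mixed graph, remembering the type of every traversed edge. -/
inductive Walk (G : MixedGraph V) : V → V → Type u
  | nil (v : V) : Walk G v v
  | cons (u v w : V) (e : EType) (h : G.IsEdge e u v) (p : Walk G v w) : Walk G u w

namespace Walk

variable {G : MixedGraph V}

/-- The list of nodes visited by a walk (with multiplicity). -/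
def support : {a b : V} → G.Walk a b → List V
  | _, _, .nil v => [v]
  | _, _, .cons u _ _ _ _ p => u :: p.support

/-- A path is a walk without repeated nodes. -/
def IsPath {a b : V} (p : G.Walk a b) : Prop := p.support.Nodup

/-- Auxiliary m-connectivity check: `ph` records whether the previous edge of
the walk has an arrowhead at the current start node.  At every interior node,
the node must be a collider (two arrowheads meet) iff it belongs to `Z`. -/
def connFrom (Z : Set V) : Prop → {a b : V} → G.Walk a b → Prop
  | _, _, _, .nil _ => True
  | ph, _, _, .cons u _ _ e _ p =>
      ((ph ∧ e.headFst) ↔ u ∈ Z) ∧ p.connFrom Z e.headSnd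

/-- The walk m-connects its endpoints given `Z`: all colliders and only
colliders on it are in `Z`. -/
def ConnBy (Z : Set V) : {a b : V} → G.Walk a b → Prop
  | _, _, .nil _ => True
  | _, _, .cons _ _ _ e _ p => p.connFrom Z e.headSnd

/-- A causal (directed) walk: every edge points towards the end node. -/
def IsCausal : {a b : V} → G.Walk a b → Prop
  | _, _, .nil _ => True
  | _, _, .cons _ _ _ e _ p => e = EType.right ∧ p.IsCausal

/-- A walk is proper w.r.t. `X` if only its start node may belong to `X`. -/
def ProperFrom (X : Set V) : {a b : V} → G.Walk a b → Prop
  | _, _, .nil _ => True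
  | _, _, .cons _ _ _ _ _ p => ∀ n ∈ p.support, n ∉ X

/-- Concatenation of walks. -/
def append : {a b c : V} → G.Walk a b → G.Walk b c → G.Walk a c
  | _, _, _, .nil _, q => q
  | _, _, _, .cons u v _ e h p, q => .cons u v _ e h (p.append q)

/-- The walk is nonempty and its first edge has an arrowhead at the start
node. -/
def headAtStart : {a b : V} → G.Walk a b → Prop
  | _, _, .nil _ => False
  | _, _, .cons _ _ _ e _ _ => e.headFst

/-- The walk is nonempty and its last edge has an arrowhead at the end node. -/
def headAtEnd : {a b : V} → G.Walk a b → Prop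
  | _, _, .nil _ => False
  | _, _, .cons _ _ _ e _ (.nil _) => e.headSnd
  | _, _, .cons _ _ _ _ _ p => p.headAtEnd

/-- `P` holds of every (ordered) pair of consecutive nodes of the walk. -/
def edgeProp (P : V → V → Prop) : {a b : V} → G.Walk a b → Prop
  | _, _, .nil _ => True
  | _, _, .cons u v _ _ _ p => P u v ∧ p.edgeProp P

end Walk

/-- `x` and `y` are m-connected given `Z`: there is a walk between them on
which all colliders and only colliders are in `Z`. -/
def MConn (G : MixedGraph V) (Z : Set V) (x y : V) : Prop :=
  ∃ p : G.Walk x y, p.ConnBy Z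

/-- `Z` m-separates the node sets `X` and `Y`. -/
def MSep (G : MixedGraph V) (X Y Z : Set V) : Prop :=
  ∀ x ∈ X, ∀ y ∈ Y, ¬ G.MConn Z x y

/-- `Z` is an m-separator relative to `(X, Y)`: it is disjoint from `X ∪ Y`
and m-separates `X` and `Y`. -/
def IsMSep (G : MixedGraph V) (X Y Z : Set V) : Prop :=
  Disjoint Z (X ∪ Y) ∧ G.MSep X Y Z

/-- An `M`-minimal m-separator relative to `(X, Y)`. -/
def IsMinMSep (G : MixedGraph V) (X Y M Z : Set V) : Prop :=
  G.IsMSep X Y Z ∧ M ⊆ Z ∧ ∀ Z', Z' ⊂ Z → M ⊆ Z' → ¬ G.IsMSep X Y Z'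

/-- One step of the anterior relation: a directed or undirected edge. -/
def antEdge (G : MixedGraph V) (u v : V) : Prop := G.dir u v ∨ G.undir u v

/-- `u` is an anterior of `v` (every node is its own anterior). -/
def Anterior (G : MixedGraph V) (u v : V) : Prop :=
  Relation.ReflTransGen G.antEdge u v

/-- The set of anteriors of nodes of `W`. -/
def Ant (G : MixedGraph V) (W : Set V) : Set V := {u | ∃ w ∈ W, G.Anterior u w}

/-- `v` is a descendant of `u`, i.e. there is a directed path `u → ⋯ → v`
(every node is its own descendant/ancestor). -/
def Anc (G : MixedGraph V) (u v : V) : Prop := Relation.ReflTransGen G.dir u v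

/-- The set of descendants of nodes of `W`. -/
def De (G : MixedGraph V) (W : Set V) : Set V := {v | ∃ w ∈ W, G.Anc w v}

/-- The set of ancestors of nodes of `W`. -/
def AnSet (G : MixedGraph V) (W : Set V) : Set V := {v | ∃ w ∈ W, G.Anc v w}

/-- An ancestral graph: (1) for each edge `a ← b` or `a ↔ b`, `a` is not an
anterior of `b`; (2) for each edge `a − b` there is no edge `a ← c`, `a ↔ c`,
`b ← c` or `b ↔ c`. -/
def IsAG (G : MixedGraph V) : Prop :=
  (∀ a b, G.dir b a ∨ G.bi a b → ¬ G.Anterior a b) ∧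
  (∀ a b, G.undir a b →
    ∀ c, ¬ G.dir c a ∧ ¬ G.bi a c ∧ ¬ G.dir c b ∧ ¬ G.bi b c)

/-- A DAG: only directed edges, and no directed cycles. -/
def IsDAG (G : MixedGraph V) : Prop :=
  (∀ u v, ¬ G.bi u v) ∧ (∀ u v, ¬ G.undir u v) ∧
  (∀ v, ¬ Relation.TransGen G.dir v v)

/-- Two nodes are adjacent if they are joined by some edge. -/
def Adjacent (G : MixedGraph V) (u v : V) : Prop :=
  G.dir u v ∨ G.dir v u ∨ G.bi u v ∨ G.undir u v

/-- A maximal ancestral graph (MAG): only directed and bidirected edges, no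
directed cycle, no almost-directed cycle, and every pair of non-adjacent
nodes can be m-separated by some set of the remaining nodes. -/
def IsMAG (G : MixedGraph V) : Prop :=
  (∀ u v, ¬ G.undir u v) ∧
  (∀ v, ¬ Relation.TransGen G.dir v v) ∧
  (∀ u v, G.bi u v → ¬ Relation.TransGen G.dir v u) ∧
  (∀ u v, u ≠ v → ¬ G.Adjacent u v →
    ∃ Z : Set V, u ∉ Z ∧ v ∉ Z ∧ ¬ G.MConn Z u v)

/-- `PCP G X Y`: the set of nodes, excluding nodes of `X`, that lie on a
proper causal path from `X` to `Y`. -/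
def PCP (G : MixedGraph V) (X Y : Set V) : Set V :=
  {w | w ∉ X ∧ ∃ x ∈ X, ∃ y ∈ Y, ∃ p : G.Walk x y,
    p.IsPath ∧ p.IsCausal ∧ p.ProperFrom X ∧ w ∈ p.support}

/-- `Dpcp G X Y`: the descendants of nodes on proper causal paths. -/
def Dpcp (G : MixedGraph V) (X Y : Set V) : Set V := G.De (G.PCP X Y)

/-- Remove from `G` all edges into `A` and all edges out of `B`. -/
def rmInOut (G : MixedGraph V) (A B : Set V) : MixedGraph V where
  dir u v := G.dir u v ∧ v ∉ A ∧ u ∉ B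
  bi u v := G.bi u v ∧ u ∉ A ∧ v ∉ A
  undir u v := G.undir u v ∧ u ∉ B ∧ v ∉ B
  bi_symm := fun u v h => ⟨G.bi_symm u v h.1, h.2.2, h.2.1⟩
  undir_symm := fun u v h => ⟨G.undir_symm u v h.1, h.2.2, h.2.1⟩

/-- The parametrized proper back-door graph: remove every edge `x → d` with
`x ∈ X` and `d ∈ PCP(X,Y) ∪ C`. -/
def pbdC (G : MixedGraph V) (X Y C : Set V) : MixedGraph V where
  dir u v := G.dir u v ∧ ¬(u ∈ X ∧ v ∈ G.PCP X Y ∪ C)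
  bi := G.bi
  undir := G.undir
  bi_symm := G.bi_symm
  undir_symm := G.undir_symm

/-- The proper back-door graph. -/
def pbd (G : MixedGraph V) (X Y : Set V) : MixedGraph V := G.pbdC X Y ∅

/-- The adjustment criterion (AC) in a DAG: (a) no element of `Z` is a
descendant in `G_{X̄}` of a node outside `X` lying on a proper causal path
from `X` to `Y`; (b) every proper non-causal path from `X` to `Y` is blocked
by `Z`. -/
def SatisfiesACdag (G : MixedGraph V) (X Y Z : Set V) : Prop :=
  (∀ z ∈ Z, z ∉ (G.rmInOut X ∅).De (G.PCP X Y)) ∧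
  (∀ x ∈ X, ∀ y ∈ Y, ∀ p : G.Walk x y,
    p.IsPath → p.ProperFrom X → ¬ p.IsCausal → ¬ p.ConnBy Z)

/-- The adjustment criterion (AC) in a MAG: (a) no element of `Z` is a
descendant in `M` of a node outside `X` lying on a proper causal path from
`X` to `Y`; (b) every proper non-causal path from `X` to `Y` is blocked by
`Z`. -/
def SatisfiesACmag (G : MixedGraph V) (X Y Z : Set V) : Prop :=
  (∀ z ∈ Z, z ∉ G.Dpcp X Y) ∧
  (∀ x ∈ X, ∀ y ∈ Y, ∀ p : G.Walk x y,
    p.IsPath → p.ProperFrom X → ¬ p.IsCausal → ¬ p.ConnBy Z)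

/-- The constructive back-door criterion (CBC): (a) `Z` avoids
`Dpcp(X,Y)`; (b) `Z` m-separates `X` and `Y` in the proper back-door
graph. -/
def SatisfiesCBC (G : MixedGraph V) (X Y Z : Set V) : Prop :=
  (∀ z ∈ Z, z ∉ G.Dpcp X Y) ∧ (G.pbd X Y).MSep X Y Z

/-- The parametrized constructive back-door criterion CBC(A,B,C). -/
def SatisfiesCBCP (G : MixedGraph V) (X Y Z A B C : Set V) : Prop :=
  (∀ z ∈ Z, z ∉ (G.rmInOut A B).De (G.PCP X Y)) ∧ (G.pbdC X Y C).MSep X Y Z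

namespace Walk

variable {G : MixedGraph V}

/-- Auxiliary check for inducing paths: every interior non-collider is in
`L`, and every interior collider is an ancestor of a node of `T`.  `ph`
records whether the previous edge has an arrowhead at the current node. -/
def indFrom (L T : Set V) : Prop → {a b : V} → G.Walk a b → Prop
  | _, _, _, .nil _ => True
  | ph, _, _, .cons u _ _ e _ p =>
      ((ph ∧ e.headFst) → ∃ t ∈ T, Relation.ReflTransGen G.dir u t) ∧
      (¬(ph ∧ e.headFst) → u ∈ L) ∧ p.indFrom L T e.headSnd

/-- Interior conditions for inducing paths (endpoints are exempt). -/
def indBody (L T : Set V) : {a b : V} → G.Walk a b → Prop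
  | _, _, .nil _ => True
  | _, _, .cons _ _ _ e _ p => p.indFrom L T e.headSnd

end Walk

/-- `p` is an inducing path with respect to `Z` and `L`: a path on which
every non-collider other than the endpoints is in `L` and every collider is
an ancestor of the endpoints or of `Z`. -/
def IsInducing (G : MixedGraph V) (Z L : Set V) {a b : V} (p : G.Walk a b) : Prop :=
  p.IsPath ∧ p.indBody L ({a, b} ∪ Z)

/-- Adjacency in the MAG `G[∅_L`: `u, v ∉ L` are adjacent iff they cannot be
d-separated in `G` by any set `W ⊆ V∖L` (not containing `u, v`). -/
def magAdj (G : MixedGraph V) (L : Set V) (u v : V) : Prop :=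
  u ∉ L ∧ v ∉ L ∧ u ≠ v ∧
  ∀ W : Set V, Disjoint W L → u ∉ W → v ∉ W → (G.MConn W u v ∧ G.MConn W v u)

/-- The MAG `G[∅_L` obtained from the DAG `G` by marginalizing `L`: adjacent
`u, v` are joined by `u → v` if `u` is an ancestor of `v` in `G` and `v` is
not an ancestor of `u`, and by `u ↔ v` if neither is an ancestor of the
other. -/
def mag (G : MixedGraph V) (L : Set V) : MixedGraph V where
  dir u v := G.magAdj L u v ∧ G.Anc u v ∧ ¬ G.Anc v u
  bi u v := G.magAdj L u v ∧ ¬ G.Anc u v ∧ ¬ G.Anc v u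
  undir _ _ := False
  bi_symm := fun u v h =>
    ⟨⟨h.1.2.1, h.1.1, h.1.2.2.1.symm,
      fun W hW hv hu => ⟨(h.1.2.2.2 W hW hu hv).2, (h.1.2.2.2 W hW hu hv).1⟩⟩,
      h.2.2, h.2.1⟩
  undir_symm := fun _ _ h => h.elim

/-- An inducing `Z`-trail in the MAG `G[∅_L`: a path whose interior nodes are
exactly the `Z`-nodes on it, each consecutive pair being linked in `G` by an
inducing path w.r.t. `∅, L` which has arrowheads at the interior nodes. -/
def IsInducingZTrail (G : MixedGraph V) (Z L : Set V) {a b : V}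
    (p : (G.mag L).Walk a b) : Prop :=
  p.IsPath ∧ a ∉ Z ∧ b ∉ Z ∧
  (∀ v ∈ p.support, v ≠ a → v ≠ b → v ∈ Z) ∧
  p.edgeProp (fun u v => ∃ q : G.Walk u v, G.IsInducing ∅ L q ∧
    (u ∈ Z → q.headAtStart) ∧ (v ∈ Z → q.headAtEnd))

end MixedGraph

open MixedGraph

variable {V : Type u}


/-! ### Auxiliary development for Statement 17 -/

namespace EType

/-- Reverse an edge type. -/
def rev : EType → EType
  | .right => .left
  | .left => .right
  | .both => .both
  | .undirEdge => .undirEdge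

@[simp] lemma headFst_right : (EType.right).headFst = False := rfl
@[simp] lemma headFst_left : (EType.left).headFst = True := rfl
@[simp] lemma headFst_both : (EType.both).headFst = True := rfl
@[simp] lemma headFst_undir : (EType.undirEdge).headFst = False := rfl
@[simp] lemma headSnd_right : (EType.right).headSnd = True := rfl
@[simp] lemma headSnd_left : (EType.left).headSnd = False := rfl
@[simp] lemma headSnd_both : (EType.both).headSnd = True := rfl
@[simp] lemma headSnd_undir : (EType.undirEdge).headSnd = False := rfl

@[simp] lemma rev_headFst (e : EType) : e.rev.headFst = e.headSnd := by cases e <;> rfl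
@[simp] lemma rev_headSnd (e : EType) : e.rev.headSnd = e.headFst := by cases e <;> rfl

end EType

namespace MixedGraph

variable {V : Type u} {G : MixedGraph V}

lemma isEdge_rev {e : EType} {x y : V} (h : G.IsEdge e x y) : G.IsEdge e.rev y x := by
  cases e with
  | right => exact h
  | left => exact h
  | both => exact G.bi_symm _ _ h
  | undirEdge => exact G.undir_symm _ _ h

namespace Walk

/-- `lastHead ph p` : whether the last edge of `p` has an arrowhead at the end
node (or `ph` if `p` is trivial). -/
def lastHead : Prop → {a b : V} → G.Walk a b → Prop
  | ph, _, _, .nil _ => ph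
  | _, _, _, .cons _ _ _ e _ p => p.lastHead e.headSnd

@[simp] lemma lastHead_nil (ph : Prop) (v : V) : (Walk.nil (G := G) v).lastHead ph = ph := rfl

@[simp] lemma lastHead_cons (ph : Prop) (u v w : V) (e : EType) (h : G.IsEdge e u v)
    (p : G.Walk v w) : (Walk.cons u v w e h p).lastHead ph = p.lastHead e.headSnd := rfl

@[simp] lemma support_nil (v : V) : (Walk.nil (G := G) v).support = [v] := rfl

@[simp] lemma support_cons (u v w : V) (e : EType) (h : G.IsEdge e u v) (p : G.Walk v w) :
    (Walk.cons u v w e h p).support = u :: p.support := rfl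

@[simp] lemma append_nil_left {a b : V} (q : G.Walk a b) :
    (Walk.nil a).append q = q := rfl

@[simp] lemma append_cons (u v w c : V) (e : EType) (h : G.IsEdge e u v) (p : G.Walk v w)
    (q : G.Walk w c) :
    (Walk.cons u v w e h p).append q = Walk.cons u v c e h (p.append q) := rfl

lemma start_mem_support : ∀ {a b : V} (p : G.Walk a b), a ∈ p.support
  | _, _, .nil _ => by simp
  | _, _, .cons _ _ _ _ _ _ => by simp

lemma end_mem_support : ∀ {a b : V} (p : G.Walk a b), b ∈ p.support
  | _, _, .nil _ => by simp
  | _, _, .cons _ _ _ _ _ p => by simp [end_mem_support p]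

lemma lastHead_append : ∀ {a b c : V} (p : G.Walk a b) (q : G.Walk b c) (ph : Prop),
    (p.append q).lastHead ph = q.lastHead (p.lastHead ph)
  | _, _, _, .nil _, q, ph => rfl
  | _, _, _, .cons u v w e h p, q, ph => by
      simp [lastHead_append p q e.headSnd]

lemma connFrom_append (Z : Set V) :
    ∀ {a b c : V} (p : G.Walk a b) (q : G.Walk b c) (ph : Prop),
    (p.append q).connFrom Z ph ↔ p.connFrom Z ph ∧ q.connFrom Z (p.lastHead ph)
  | _, _, _, .nil _, q, ph => by simp [Walk.connFrom]
  | _, _, _, .cons u v w e h p, q, ph => by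
      simp only [append_cons, Walk.connFrom, lastHead_cons,
        connFrom_append Z p q e.headSnd, and_assoc]

lemma indFrom_append (L T : Set V) :
    ∀ {a b c : V} (p : G.Walk a b) (q : G.Walk b c) (ph : Prop),
    p.indFrom L T ph → q.indFrom L T (p.lastHead ph) → (p.append q).indFrom L T ph
  | _, _, _, .nil _, q, ph, _, hq => hq
  | _, _, _, .cons u v w e h p, q, ph, hp, hq => by
      exact ⟨hp.1, hp.2.1, indFrom_append L T p q e.headSnd hp.2.2 hq⟩

lemma indFrom_mono {L T T' : Set V}
    (hT : ∀ t ∈ T, ∃ t' ∈ T', Relation.ReflTransGen G.dir t t') :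
    ∀ {a b : V} (p : G.Walk a b) (ph : Prop), p.indFrom L T ph → p.indFrom L T' ph
  | _, _, .nil _, ph, _ => trivial
  | _, _, .cons u v w e h p, ph, hp => by
      refine ⟨fun hc => ?_, hp.2.1, indFrom_mono hT p e.headSnd hp.2.2⟩
      obtain ⟨t, ht, h1⟩ := hp.1 hc
      obtain ⟨t', ht', h2⟩ := hT t ht
      exact ⟨t', ht', h1.trans h2⟩

lemma connBy_of_connFrom_false {Z : Set V} :
    ∀ {a b : V} (p : G.Walk a b), p.connFrom Z False → p.ConnBy Z
  | _, _, .nil _, _ => trivial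
  | _, _, .cons _ _ _ _ _ _, h => h.2

/-- Reversal of a walk. -/
def reverse : {a b : V} → G.Walk a b → G.Walk b a
  | _, _, .nil v => .nil v
  | _, _, .cons u v _ e h p =>
      p.reverse.append (.cons v u u e.rev (isEdge_rev h) (.nil u))

lemma connFrom_reverse_aux (Z : Set V) :
    ∀ {a b : V} (p : G.Walk a b) (ph qh : Prop),
    p.connFrom Z ph → ((p.lastHead ph ∧ qh) ↔ b ∈ Z) →
    p.reverse.connFrom Z qh ∧ ((p.reverse.lastHead qh ∧ ph) ↔ a ∈ Z)
  | _, _, .nil v, ph, qh, _, hl => by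
      refine ⟨trivial, ?_⟩
      simp only [lastHead_nil] at hl ⊢
      tauto
  | _, _, .cons u v w e h p, ph, qh, hc, hl => by
      simp only [Walk.connFrom] at hc
      simp only [lastHead_cons] at hl
      obtain ⟨ih1, ih2⟩ := connFrom_reverse_aux Z p e.headSnd qh hc.2 hl
      constructor
      · show (p.reverse.append _).connFrom Z qh
        rw [connFrom_append]
        refine ⟨ih1, ?_, trivial⟩
        simpa using ih2
      · show ((p.reverse.append _).lastHead qh ∧ ph) ↔ u ∈ Z
        rw [lastHead_append]
        simp only [lastHead_cons, lastHead_nil, EType.rev_headSnd]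
        exact (and_comm).trans hc.1

lemma connFrom_false_reverse {Z : Set V} {a b : V} {p : G.Walk a b}
    (h : p.connFrom Z False) (hb : b ∉ Z) : p.reverse.connFrom Z False :=
  (connFrom_reverse_aux Z p False False h
    (iff_of_false (fun c => c.2) hb)).1

@[simp] lemma headAtStart_cons (u v w : V) (e : EType) (h : G.IsEdge e u v) (p : G.Walk v w) :
    (Walk.cons u v w e h p).headAtStart = e.headFst := rfl

lemma headAtEnd_cons_nil (u v : V) (e : EType) (h : G.IsEdge e u v) :
    (Walk.cons u v v e h (.nil v)).headAtEnd = e.headSnd := rfl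

lemma headAtEnd_cons_cons (u v v' w : V) (e e' : EType) (h : G.IsEdge e u v)
    (h' : G.IsEdge e' v v') (p : G.Walk v' w) :
    (Walk.cons u v w e h (Walk.cons v v' w e' h' p)).headAtEnd
      = (Walk.cons v v' w e' h' p).headAtEnd := rfl

lemma lastHead_iff_headAtEnd :
    ∀ {v w : V} (p : G.Walk v w) {u : V} (e : EType) (h : G.IsEdge e u v) (ph : Prop),
    ((Walk.cons u v w e h p).lastHead ph ↔ (Walk.cons u v w e h p).headAtEnd)
  | _, _, .nil _, u, e, h, ph => by
      rw [headAtEnd_cons_nil]; simp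
  | _, _, .cons v v' w' e' h' p, u, e, h, ph => by
      rw [headAtEnd_cons_cons]
      simpa using lastHead_iff_headAtEnd p e' h' e.headSnd

lemma headAtEnd_append_cons :
    ∀ {a b y c : V} (p : G.Walk a b) (e : EType) (h : G.IsEdge e b y) (q : G.Walk y c),
    ((p.append (Walk.cons b y c e h q)).headAtEnd ↔ (Walk.cons b y c e h q).headAtEnd)
  | _, _, _, _, .nil _, e, h, q => Iff.rfl
  | _, _, _, _, .cons a x w e0 h0 p, e, h, q => by
      rw [append_cons]
      cases p with
      | nil =>
        rw [append_nil_left, headAtEnd_cons_cons]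
      | cons x x' _ e1 h1 p1 =>
        rw [append_cons, headAtEnd_cons_cons, ← append_cons]
        exact headAtEnd_append_cons _ e h q

lemma edgeProp_mono {P P' : V → V → Prop} (hP : ∀ u v, P u v → P' u v) :
    ∀ {a b : V} (p : G.Walk a b), p.edgeProp P → p.edgeProp P'
  | _, _, .nil _, _ => trivial
  | _, _, .cons u v w e h p, hp => ⟨hP _ _ hp.1, edgeProp_mono hP p hp.2⟩

end Walk

/-! ### The Verma–Pearl argument: inducing walks yield m-connection -/

section VP

variable {W L : Set V}

open Walk

/-- Descend from `x` along a directed path to `t`; either bounce off `W`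
(round trip back to `x`), or obtain both an m-connecting descent and climb. -/
lemma desc (W : Set V) {x t : V} (h : Relation.ReflTransGen G.dir x t) :
    x ∉ W →
    (∃ β : G.Walk x x, (∀ ph, β.connFrom W ph) ∧ (∀ ph, ¬ β.lastHead ph)) ∨
    ((∃ δ : G.Walk x t, ∀ ph, δ.connFrom W ph) ∧
      ∃ γ : G.Walk t x, γ.connFrom W False ∧ ¬ γ.lastHead False) := by
  induction h using Relation.ReflTransGen.head_induction_on with
  | refl =>
      intro hx
      exact .inr ⟨⟨.nil _, fun _ => trivial⟩, .nil _, trivial, fun h => h⟩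
  | head hxy hyt ih =>
      rename_i x' y
      intro hx
      by_cases hyW : y ∈ W
      · refine .inl ⟨.cons x' y x' .right hxy (.cons y x' x' .left hxy (.nil x')), ?_, ?_⟩
        · intro ph
          exact ⟨iff_of_false (fun c => c.2) hx,
            iff_of_true (by simp) hyW, trivial⟩
        · intro ph
          exact fun h => h
      · rcases ih hyW with ⟨β, hβ, hβl⟩ | ⟨⟨δ, hδ⟩, γ, hγ, hγl⟩
        · refine .inl ⟨.cons x' y x' .right hxy (β.append (.cons y x' x' .left hxy (.nil x'))), ?_, ?_⟩
          · intro ph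
            refine ⟨iff_of_false (fun c => c.2) hx, ?_⟩
            rw [connFrom_append]
            exact ⟨hβ _, iff_of_false (fun c => hβl _ c.1) hyW, trivial⟩
          · intro ph h
            exact cast (lastHead_append β (Walk.cons y x' x' .left hxy (.nil x')) EType.right.headSnd) h
        · refine .inr ⟨⟨.cons x' y t .right hxy δ, ?_⟩,
            γ.append (.cons y x' x' .left hxy (.nil x')), ?_, ?_⟩
          · intro ph
            exact ⟨iff_of_false (fun c => c.2) hx, hδ _⟩
          · rw [connFrom_append]
            exact ⟨hγ, iff_of_false (fun c => hγl c.1) hyW, trivial⟩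
          · exact fun h => cast (lastHead_append γ (Walk.cons y x' x' .left hxy (.nil x')) False) h

/-- The core walk transformation: from an inducing-walk suffix, obtain an
m-connecting walk (possibly restarting from `u`). -/
lemma core (hWL : Disjoint W L) {u v : V} (hu : u ∉ W) (hv : v ∉ W) :
    ∀ {x : V} (q : G.Walk x v) (ph : Prop), q.indFrom L {u, v} ph →
      (∃ p : G.Walk x v, p.connFrom W ph) ∨ (∃ p : G.Walk u v, p.connFrom W False)
  | _, .nil _, ph, _ => .inl ⟨.nil _, trivial⟩
  | x, .cons _ y _ e h q', ph, hind => by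
    obtain ⟨hcol, hncol, hq'⟩ := hind
    by_cases hxcol : ph ∧ e.headFst
    · by_cases hxW : x ∈ W
      · rcases core hWL hu hv q' e.headSnd hq' with ⟨p', hp'⟩ | hp
        · exact .inl ⟨.cons x y _ e h p', iff_of_true hxcol hxW, hp'⟩
        · exact .inr hp
      · obtain ⟨t, ht, hanc⟩ := hcol hxcol
        simp only [Set.mem_insert_iff, Set.mem_singleton_iff] at ht
        rcases desc W hanc hxW with ⟨β, hβ, hβl⟩ | ⟨⟨δ, hδ⟩, γ, hγ, hγl⟩
        · rcases core hWL hu hv q' e.headSnd hq' with ⟨p', hp'⟩ | hp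
          · refine .inl ⟨β.append (.cons x y _ e h p'), ?_⟩
            rw [connFrom_append]
            exact ⟨hβ _, iff_of_false (fun c => hβl _ c.1) hxW, hp'⟩
          · exact .inr hp
        · rcases ht with rfl | rfl
          · -- t = u : restart from u via the climb γ
            rcases core hWL hu hv q' e.headSnd hq' with ⟨p', hp'⟩ | hp
            · refine .inr ⟨γ.append (.cons x y _ e h p'), ?_⟩
              rw [connFrom_append]
              exact ⟨hγ, iff_of_false (fun c => hγl c.1) hxW, hp'⟩
            · exact .inr hp
          · -- t = v : truncate, descending to v
            exact .inl ⟨δ, hδ _⟩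
    · have hxL : x ∈ L := hncol hxcol
      have hxW : x ∉ W := Set.disjoint_right.mp hWL hxL
      rcases core hWL hu hv q' e.headSnd hq' with ⟨p', hp'⟩ | hp
      · exact .inl ⟨.cons x y _ e h p', iff_of_false hxcol hxW, hp'⟩
      · exact .inr hp

/-- Verma–Pearl: an inducing walk yields m-connection given any admissible `W`,
in both directions. -/
lemma vp (hWL : Disjoint W L) {u v : V} (hu : u ∉ W) (hv : v ∉ W)
    (q : G.Walk u v) (hq : q.indBody L {u, v}) :
    G.MConn W u v ∧ G.MConn W v u := by
  obtain ⟨p, hp⟩ : ∃ p : G.Walk u v, p.connFrom W False := by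
    cases q with
    | nil => exact ⟨.nil _, trivial⟩
    | cons _ y _ e h q' =>
      rcases core hWL hu hv q' e.headSnd hq with ⟨p', hp'⟩ | hres
      · exact ⟨.cons _ y _ e h p', iff_of_false (fun c => c.1) hu, hp'⟩
      · exact hres
  exact ⟨⟨p, connBy_of_connFrom_false p hp⟩,
    ⟨p.reverse, connBy_of_connFrom_false _ (connFrom_false_reverse hp hv)⟩⟩

end VP

/-! ### MAG edge facts -/

lemma magAdj_symm {L : Set V} {u v : V} (h : G.magAdj L u v) : G.magAdj L v u :=
  ⟨h.2.1, h.1, h.2.2.1.symm, fun W hW h1 h2 =>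
    ⟨(h.2.2.2 W hW h2 h1).2, (h.2.2.2 W hW h2 h1).1⟩⟩

lemma mag_isEdge_adj {L : Set V} {e : EType} {u x : V}
    (h : (G.mag L).IsEdge e u x) : G.magAdj L u x := by
  cases e with
  | right => exact h.1
  | left => exact magAdj_symm h.1
  | both => exact h.1
  | undirEdge => exact h.elim

lemma anc_of_not_headSnd {L : Set V} {e : EType} {u x : V}
    (h : (G.mag L).IsEdge e u x) (hn : ¬ e.headSnd) : G.Anc x u := by
  cases e with
  | right => exact absurd trivial hn
  | left => exact h.2.1
  | both => exact absurd trivial hn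
  | undirEdge => exact h.elim

lemma anc_of_not_headFst {L : Set V} {e : EType} {x y : V}
    (h : (G.mag L).IsEdge e x y) (hn : ¬ e.headFst) : G.Anc x y := by
  cases e with
  | right => exact h.2.1
  | left => exact absurd trivial hn
  | both => exact absurd trivial hn
  | undirEdge => exact h.elim

/-- The edge condition maintained along the trail. -/
def auxQ (G : MixedGraph V) (Z L : Set V) (u v : V) : Prop :=
  ∃ q : G.Walk u v, q.indBody L {u, v} ∧
    (u ∈ Z → q.headAtStart) ∧ (v ∈ Z → q.headAtEnd)

end MixedGraph
namespace MixedGraph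

variable {V : Type u} {G : MixedGraph V}

open Walk

/-- Scan a suffix of the trail: either it is already m-connecting with the
given incoming state, or some interior node can be removed. -/
lemma scan (hDAG : G.IsDAG) (Z L : Set V) :
    ∀ {x b : V} (t : (G.mag L).Walk x b), ∀ {u : V} (e₀ : EType),
    (G.mag L).IsEdge e₀ u x →
    (u :: t.support).Nodup → b ∉ Z → (∀ v ∈ t.support, v ≠ b → v ∈ Z) →
    auxQ G Z L u x → t.edgeProp (auxQ G Z L) →
    t.connFrom Z e₀.headSnd ∨
    ∃ t' : (G.mag L).Walk u b, t'.support.Sublist (u :: t.support) ∧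
      t'.support.length < (u :: t.support).length ∧
      (∀ v ∈ t'.support, v ≠ b → v = u ∨ v ∈ Z) ∧ t'.edgeProp (auxQ G Z L) := by
  intro x b t
  induction t with
  | nil => intro u e₀ _ _ _ _ _ _; exact .inl trivial
  | cons x y bb e₁ h₁ t₁ ih =>
    intro u e₀ h₀ hnd hb hint hQ hedge
    simp only [support_cons] at hnd
    have hnd2 : (x :: t₁.support).Nodup := hnd.of_cons
    have hx_nin : x ∉ t₁.support := (List.nodup_cons.mp hnd2).1
    have hxb : x ≠ bb := fun hh => hx_nin (hh ▸ end_mem_support t₁)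
    have hxZ : x ∈ Z := hint x (by simp) hxb
    by_cases hcol : e₀.headSnd ∧ e₁.headFst
    · rcases ih e₁ h₁ hnd2 hb (fun v hv hvb => hint v (by simp [hv]) hvb)
        hedge.1 hedge.2 with hc | ⟨t', h1, h2, h3, h4⟩
      · exact .inl ⟨iff_of_true hcol hxZ, hc⟩
      · refine .inr ⟨.cons u x _ e₀ h₀ t', ?_, ?_, ?_, hQ, h4⟩
        · simpa using h1.cons₂ u
        · simp only [support_cons, List.length_cons] at h2 ⊢; omega
        · intro v hv hvb
          simp only [support_cons, List.mem_cons] at hv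
          rcases hv with rfl | hv
          · exact .inl rfl
          · rcases h3 v hv hvb with rfl | hvZ
            · exact .inr hxZ
            · exact .inr hvZ
    · -- remove the non-collider x
      have hadj0 := mag_isEdge_adj h₀
      have hadj1 := mag_isEdge_adj h₁
      have huL : u ∉ L := hadj0.1
      have hyL : y ∉ L := hadj1.2.1
      have hux : u ≠ x := hadj0.2.2.1
      have hxy : x ≠ y := hadj1.2.2.1
      have hA : G.Anc x u ∨ G.Anc x y := by
        by_cases h1' : e₀.headSnd
        · by_cases h2' : e₁.headFst
          · exact absurd ⟨h1', h2'⟩ hcol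
          · exact .inr (anc_of_not_headFst h₁ h2')
        · exact .inl (anc_of_not_headSnd h₀ h1')
      obtain ⟨q₁, hb₁, hs₁, he₁⟩ := hQ
      obtain ⟨q₂, hb₂, hs₂, he₂⟩ := hedge.1
      have huy : u ≠ y := by
        intro hh
        exact (List.nodup_cons.mp hnd).1 (by simp [hh, start_mem_support t₁])
      cases q₁ with
      | nil => exact absurd rfl hux
      | cons _ u₁ _ f hf q₁' =>
      cases q₂ with
      | nil => exact absurd rfl hxy
      | cons _ x₁ _ g hg q₂' =>
      have hT₁ : ∀ s ∈ ({u, x} : Set V), ∃ s' ∈ ({u, y} : Set V),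
          Relation.ReflTransGen G.dir s s' := by
        intro s hs
        simp only [Set.mem_insert_iff, Set.mem_singleton_iff] at hs
        rcases hs with rfl | rfl
        · exact ⟨s, by simp, Relation.ReflTransGen.refl⟩
        · rcases hA with h' | h'
          · exact ⟨u, by simp, h'⟩
          · exact ⟨y, by simp, h'⟩
      have hT₂ : ∀ s ∈ ({x, y} : Set V), ∃ s' ∈ ({u, y} : Set V),
          Relation.ReflTransGen G.dir s s' := by
        intro s hs
        simp only [Set.mem_insert_iff, Set.mem_singleton_iff] at hs
        rcases hs with rfl | rfl
        · rcases hA with h' | h'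
          · exact ⟨u, by simp, h'⟩
          · exact ⟨y, by simp, h'⟩
        · exact ⟨s, by simp, Relation.ReflTransGen.refl⟩
      set q : G.Walk u y :=
        (Walk.cons u u₁ x f hf q₁').append (Walk.cons x x₁ y g hg q₂') with hqdef
      have hbody : q.indBody L {u, y} := by
        show (q₁'.append (Walk.cons x x₁ y g hg q₂')).indFrom L {u, y} f.headSnd
        refine indFrom_append L _ q₁' _ f.headSnd
          (indFrom_mono hT₁ q₁' f.headSnd hb₁) ?_
        refine ⟨fun _ => ?_, fun hn => ?_, indFrom_mono hT₂ q₂' g.headSnd hb₂⟩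
        · rcases hA with h' | h'
          · exact ⟨u, by simp, h'⟩
          · exact ⟨y, by simp, h'⟩
        · refine absurd ⟨?_, hs₂ hxZ⟩ hn
          exact (lastHead_iff_headAtEnd q₁' f hf f.headSnd).mpr (he₁ hxZ)
      have hstart : u ∈ Z → q.headAtStart := hs₁
      have hend : y ∈ Z → q.headAtEnd := fun hz =>
        (headAtEnd_append_cons _ g hg q₂').mpr (he₂ hz)
      have hadj : G.magAdj L u y :=
        ⟨huL, hyL, huy, fun W hW h1 h2 => vp hW h1 h2 q hbody⟩
      obtain ⟨e', h'⟩ : ∃ e', (G.mag L).IsEdge e' u y := by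
        by_cases hA1 : G.Anc u y
        · by_cases hA2 : G.Anc y u
          · exfalso
            rcases Relation.reflTransGen_iff_eq_or_transGen.mp hA1 with rfl | htg
            · exact huy rfl
            · exact hDAG.2.2 y (Relation.TransGen.trans_right hA2 htg)
          · exact ⟨.right, hadj, hA1, hA2⟩
        · by_cases hA2 : G.Anc y u
          · exact ⟨.left, magAdj_symm hadj, hA2, hA1⟩
          · exact ⟨.both, hadj, hA1, hA2⟩
      refine .inr ⟨.cons u y _ e' h' t₁, ?_, ?_, ?_, ?_, hedge.2⟩
      · simpa using (List.sublist_cons_self x t₁.support).cons₂ u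
      · simp
      · intro v hv hvb
        simp only [support_cons, List.mem_cons] at hv
        rcases hv with rfl | hv
        · exact .inl rfl
        · exact .inr (hint v (by simp [hv]) hvb)
      · exact ⟨q, hbody, hstart, hend⟩

/-- The main induction: repeatedly remove non-collider interior nodes. -/
lemma mainLemma (hDAG : G.IsDAG) (Z L : Set V) :
    ∀ (n : ℕ) {a b : V} (p : (G.mag L).Walk a b), p.support.length ≤ n →
    p.IsPath → a ∉ Z → b ∉ Z →
    (∀ v ∈ p.support, v ≠ a → v ≠ b → v ∈ Z) → p.edgeProp (auxQ G Z L) →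
    ∃ p' : (G.mag L).Walk a b, p'.IsPath ∧ p'.support.Sublist p.support ∧
      p'.ConnBy Z := by
  intro n
  induction n with
  | zero =>
    intro a b p hlen _ _ _ _ _
    exfalso
    have := start_mem_support p
    have := List.length_pos_of_mem this
    omega
  | succ n ih =>
    intro a b p hlen hpath ha hb hint hedge
    cases p with
    | nil =>
      exact ⟨.nil _, by simp [Walk.IsPath], List.Sublist.refl _, trivial⟩
    | cons a x bb e₀ h₀ t =>
      have hndp : (a :: t.support).Nodup := hpath
      have hint' : ∀ v ∈ t.support, v ≠ b → v ∈ Z := by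
        intro v hv hvb
        by_cases hva : v = a
        · exact absurd hv (hva ▸ (List.nodup_cons.mp hndp).1)
        · exact hint v (by simp [hv]) hva hvb
      rcases scan hDAG Z L t e₀ h₀ hndp hb hint' hedge.1 hedge.2 with
        hc | ⟨t', hsub, hlt, hin, hep⟩
      · exact ⟨.cons a x _ e₀ h₀ t, hpath, List.Sublist.refl _, hc⟩
      · have hsub' : t'.support.Sublist (a :: t.support) := hsub
        have hnd' : t'.IsPath := hsub'.nodup hndp
        have hlen' : t'.support.length ≤ n := by
          simp only [support_cons, List.length_cons] at hlen hlt ⊢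
          omega
        obtain ⟨p'', h1, h2, h3⟩ := ih t' hlen' hnd' ha hb
          (fun v hv hva hvb => (hin v hv hvb).resolve_left hva) hep
        exact ⟨p'', h1, h2.trans (by simpa using hsub'), h3⟩

end MixedGraph

open MixedGraph

theorem statement_17 (G : MixedGraph V) (hDAG : G.IsDAG)
    (Z L : Set V) (hZL : Disjoint Z L)
    {a b : V} (p : (G.mag L).Walk a b) (hp : G.IsInducingZTrail Z L p) :
    ∃ p' : (G.mag L).Walk a b, p'.IsPath ∧ p'.support.Sublist p.support ∧
      p'.ConnBy Z := by
  obtain ⟨hpath, ha, hb, hint, hedge⟩ := hp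
  have hedge' : p.edgeProp (auxQ G Z L) := by
    refine Walk.edgeProp_mono (fun u v h => ?_) p hedge
    obtain ⟨q, ⟨_, hbody⟩, h1, h2⟩ := h
    rw [Set.union_empty] at hbody
    exact ⟨q, hbody, h1, h2⟩
  exact mainLemma hDAG Z L p.support.length p le_rfl hpath ha hb hint hedge'
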